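/- arXiv:2602.11523 — 2 statements merged into one kernel-verified Lean document; each statement's English description precedes it below -/
import Mathlib

section
/- Let πₜ, π₀ be strictly positive distributions on finite Y and consider the gradient surrogate L(θ-free form): the weighted SFT objective G(q) = Σ_y πₜ(y)·(π₀(y)/πₜ(y))^α·exp(A(y)/β)·log q(y) over strictly positive distributions q. Then G(q) = Z·[−KL(π*‖q) − H(π*)] up to the additive constant Z·(−H(π*)), where π* is the dual-KL optimal policy, Z its partition function, and H the Shannon entropy; hence maximizing G is equivalent to minimizing KL(π*‖q). -/
open Real Finset

/- The weight `πₜ (π₀/πₜ)^α exp(A/β)` of the SFT objective is the unnormalised tilted density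
`Z π*`, so `G q = Z ∑ π* log q`; the cross entropy `-∑ π* log q` splits as `KL(π*‖q) + H(π*)`, and
since `Z > 0` comparing `G` values is comparing KL divergences with the order reversed. -/

lemma Real.mul_div_rpow_eq_rpow_mul_rpow_one_sub {p t : ℝ} (hp : 0 ≤ p) (ht : 0 < t) (α : ℝ) :
    t * (p / t) ^ α = p ^ α * t ^ (1 - α) := by
  rw [div_rpow hp ht.le, rpow_sub ht, rpow_one]
  have : t ^ α ≠ 0 := (rpow_pos_of_pos ht α).ne'
  field_simp

lemma Finset.sum_mul_log_div {ι : Type*} (s : Finset ι) {p q : ι → ℝ}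
    (hp : ∀ i ∈ s, p i ≠ 0) (hq : ∀ i ∈ s, q i ≠ 0) :
    ∑ i ∈ s, p i * log (p i / q i) = ∑ i ∈ s, p i * log (p i) - ∑ i ∈ s, p i * log (q i) := by
  rw [← sum_sub_distrib]
  refine sum_congr rfl fun i hi => ?_
  rw [log_div (hp i hi) (hq i hi), mul_sub]

theorem weighted_sft_objective_equals_scaled_kl_general
    {Y : Type*} [Fintype Y] [Nonempty Y]
    (π₀ πt : Y → ℝ)
    (hπ0 : ∀ y, 0 < π₀ y) (hπt : ∀ y, 0 < πt y)
    (A : Y → ℝ) (α : ℝ) (β : ℝ)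
    (Z : ℝ) (hZ : Z = ∑ y, π₀ y ^ α * πt y ^ (1 - α) * Real.exp (A y / β))
    (πstar : Y → ℝ)
    (hstar : ∀ y, πstar y = π₀ y ^ α * πt y ^ (1 - α) * Real.exp (A y / β) / Z)
    (G : (Y → ℝ) → ℝ)
    (hG : ∀ q, G q = ∑ y, πt y * (π₀ y / πt y) ^ α * Real.exp (A y / β)
      * Real.log (q y))
    (H : (Y → ℝ) → ℝ)
    (hH : ∀ p, H p = -∑ y, p y * Real.log (p y)) :
    (∀ q : Y → ℝ, (∀ y, 0 < q y) →
      G q = Z * (-(∑ y, πstar y * Real.log (πstar y / q y)) - H πstar)) ∧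
    (∀ q₁ q₂ : Y → ℝ, (∀ y, 0 < q₁ y) → (∀ y, 0 < q₂ y) →
      (G q₁ ≤ G q₂ ↔
        (∑ y, πstar y * Real.log (πstar y / q₂ y))
          ≤ ∑ y, πstar y * Real.log (πstar y / q₁ y))) := by
  have hw_pos : ∀ y, 0 < π₀ y ^ α * πt y ^ (1 - α) * exp (A y / β) := fun y => by
    have := hπ0 y; have := hπt y; positivity
  have hZ_pos : 0 < Z := hZ ▸ sum_pos (fun y _ => hw_pos y) univ_nonempty
  have hstar_ne : ∀ y ∈ univ, πstar y ≠ 0 := fun y _ =>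
    (hstar y ▸ div_pos (hw_pos y) hZ_pos).ne'
  have hG_cross : ∀ q, G q = Z * ∑ y, πstar y * log (q y) := fun q => by
    rw [hG, mul_sum]
    refine sum_congr rfl fun y _ => ?_
    rw [mul_div_rpow_eq_rpow_mul_rpow_one_sub (hπ0 y).le (hπt y), hstar, ← mul_assoc,
      mul_div_cancel₀ _ hZ_pos.ne']
  have hKL : ∀ q : Y → ℝ, (∀ y, 0 < q y) → ∑ y, πstar y * log (πstar y / q y)
      = ∑ y, πstar y * log (πstar y) - ∑ y, πstar y * log (q y) := fun q hq =>
    sum_mul_log_div univ hstar_ne fun y _ => (hq y).ne'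
  refine ⟨fun q hq => ?_, fun q₁ q₂ hq₁ hq₂ => ?_⟩
  · rw [hG_cross, hKL q hq, hH]
    ring
  · rw [hG_cross, hG_cross, mul_le_mul_iff_right₀ hZ_pos, hKL q₁ hq₁, hKL q₂ hq₂]
    constructor <;> intro h <;> linarith

theorem weighted_sft_objective_equals_scaled_kl
    {Y : Type*} [Fintype Y] [Nonempty Y]
    (π₀ πt : Y → ℝ)
    (hπ0 : ∀ y, 0 < π₀ y) (hπt : ∀ y, 0 < πt y)
    (hπ0sum : ∑ y, π₀ y = 1) (hπtsum : ∑ y, πt y = 1)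
    (A : Y → ℝ) (α : ℝ) (hα : α ∈ Set.Icc (0:ℝ) 1) (β : ℝ) (hβ : 0 < β)
    (Z : ℝ) (hZ : Z = ∑ y, π₀ y ^ α * πt y ^ (1 - α) * Real.exp (A y / β))
    (πstar : Y → ℝ)
    (hstar : ∀ y, πstar y = π₀ y ^ α * πt y ^ (1 - α) * Real.exp (A y / β) / Z)
    (G : (Y → ℝ) → ℝ)
    (hG : ∀ q, G q = ∑ y, πt y * (π₀ y / πt y) ^ α * Real.exp (A y / β)
      * Real.log (q y))
    (H : (Y → ℝ) → ℝ)
    (hH : ∀ p, H p = -∑ y, p y * Real.log (p y)) :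
    (∀ q : Y → ℝ, (∀ y, 0 < q y) →
      G q = Z * (-(∑ y, πstar y * Real.log (πstar y / q y)) - H πstar)) ∧
    (∀ q₁ q₂ : Y → ℝ, (∀ y, 0 < q₁ y) → (∀ y, 0 < q₂ y) →
      (G q₁ ≤ G q₂ ↔
        (∑ y, πstar y * Real.log (πstar y / q₂ y))
          ≤ ∑ y, πstar y * Real.log (πstar y / q₁ y))) :=
  weighted_sft_objective_equals_scaled_kl_general π₀ πt hπ0 hπt A α β Z hZ πstar hstar G hG H hH
end

section
/- Let Y be finite, A : Y → ℝ non-constant, π_ref strictly positive, and for β > 0 let π*_β be the tilted policy π*_β(y) = π_ref(y)exp(A(y)/β)/Z(β). Then the expected advantage β ↦ Σ_y π*_β(y) A(y) is strictly decreasing in β, and the divergence β ↦ KL(π*_β‖π_ref) is strictly decreasing in β. -/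
open Real Finset

lemma pointwise_corr (t₁ t₂ wa wb Aa Ab : ℝ) (hwa : 0 < wa) (hwb : 0 < wb)
    (ht : t₂ < t₁) :
    0 ≤ (Aa - Ab) * (wa * Real.exp (t₁ * Aa) * (wb * Real.exp (t₂ * Ab))
      - wa * Real.exp (t₂ * Aa) * (wb * Real.exp (t₁ * Ab))) := by
  have hkey : 0 ≤ (Aa - Ab) * (Real.exp (t₁ * Aa + t₂ * Ab) - Real.exp (t₂ * Aa + t₁ * Ab)) := by
    rcases le_or_gt Aa Ab with h | h
    · have h2 : t₁ * Aa + t₂ * Ab ≤ t₂ * Aa + t₁ * Ab := by nlinarith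
      have h3 := Real.exp_le_exp.mpr h2
      nlinarith [mul_nonneg (by linarith : (0:ℝ) ≤ Ab - Aa)
        (by linarith : (0:ℝ) ≤ Real.exp (t₂ * Aa + t₁ * Ab) - Real.exp (t₁ * Aa + t₂ * Ab))]
    · have h2 : t₂ * Aa + t₁ * Ab ≤ t₁ * Aa + t₂ * Ab := by nlinarith
      have h3 := Real.exp_le_exp.mpr h2
      exact mul_nonneg (by linarith) (by linarith)
  calc (0:ℝ) ≤ (wa * wb) * ((Aa - Ab) * (Real.exp (t₁ * Aa + t₂ * Ab) - Real.exp (t₂ * Aa + t₁ * Ab))) :=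
        mul_nonneg (by positivity) hkey
    _ = (Aa - Ab) * (wa * Real.exp (t₁ * Aa) * (wb * Real.exp (t₂ * Ab))
      - wa * Real.exp (t₂ * Aa) * (wb * Real.exp (t₁ * Ab))) := by
        rw [Real.exp_add, Real.exp_add]; ring

lemma pointwise_corr_strict (t₁ t₂ wa wb Aa Ab : ℝ) (hwa : 0 < wa) (hwb : 0 < wb)
    (ht : t₂ < t₁) (hab : Aa ≠ Ab) :
    0 < (Aa - Ab) * (wa * Real.exp (t₁ * Aa) * (wb * Real.exp (t₂ * Ab))
      - wa * Real.exp (t₂ * Aa) * (wb * Real.exp (t₁ * Ab))) := by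
  have hkey : 0 < (Aa - Ab) * (Real.exp (t₁ * Aa + t₂ * Ab) - Real.exp (t₂ * Aa + t₁ * Ab)) := by
    rcases lt_or_gt_of_ne hab with h | h
    · have h2 : t₁ * Aa + t₂ * Ab < t₂ * Aa + t₁ * Ab := by nlinarith
      have h3 := Real.exp_lt_exp.mpr h2
      nlinarith [mul_pos (by linarith : (0:ℝ) < Ab - Aa)
        (by linarith : (0:ℝ) < Real.exp (t₂ * Aa + t₁ * Ab) - Real.exp (t₁ * Aa + t₂ * Ab))]
    · have h2 : t₂ * Aa + t₁ * Ab < t₁ * Aa + t₂ * Ab := by nlinarith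
      have h3 := Real.exp_lt_exp.mpr h2
      exact mul_pos (by linarith) (by linarith)
  calc (0:ℝ) < (wa * wb) * ((Aa - Ab) * (Real.exp (t₁ * Aa + t₂ * Ab) - Real.exp (t₂ * Aa + t₁ * Ab))) :=
        mul_pos (by positivity) hkey
    _ = _ := by rw [Real.exp_add, Real.exp_add]; ring

lemma cheb_sum {Y : Type*} [Fintype Y] (A w : Y → ℝ) (hw : ∀ y, 0 < w y)
    (t₁ t₂ : ℝ) (ht : t₂ < t₁) (y₀ y₁ : Y) (hA : A y₀ ≠ A y₁) :
    (∑ y, w y * Real.exp (t₂ * A y) * A y) * (∑ y, w y * Real.exp (t₁ * A y))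
      < (∑ y, w y * Real.exp (t₁ * A y) * A y) * (∑ y, w y * Real.exp (t₂ * A y)) := by
  set g₁ : Y → ℝ := fun y => w y * Real.exp (t₁ * A y) with hg₁
  set g₂ : Y → ℝ := fun y => w y * Real.exp (t₂ * A y) with hg₂
  have key : 0 < ∑ p ∈ (univ ×ˢ univ : Finset (Y × Y)),
      (A p.1 - A p.2) * (g₁ p.1 * g₂ p.2 - g₂ p.1 * g₁ p.2) := by
    apply Finset.sum_pos'
    · intro p _
      exact pointwise_corr t₁ t₂ (w p.1) (w p.2) (A p.1) (A p.2) (hw p.1) (hw p.2) ht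
    · exact ⟨(y₀, y₁), mem_product.mpr ⟨mem_univ _, mem_univ _⟩,
        pointwise_corr_strict t₁ t₂ (w y₀) (w y₁) (A y₀) (A y₁) (hw y₀) (hw y₁) ht hA⟩
  have swap : ∑ p ∈ (univ ×ˢ univ : Finset (Y × Y)), A p.1 * (g₁ p.1 * g₂ p.2 - g₂ p.1 * g₁ p.2)
      = ∑ p ∈ (univ ×ˢ univ : Finset (Y × Y)), A p.2 * (g₁ p.2 * g₂ p.1 - g₂ p.2 * g₁ p.1) := by
    rw [Finset.sum_product, Finset.sum_product]
    exact Finset.sum_comm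
  have expand : ∑ p ∈ (univ ×ˢ univ : Finset (Y × Y)),
      (A p.1 - A p.2) * (g₁ p.1 * g₂ p.2 - g₂ p.1 * g₁ p.2)
      = 2 * ∑ p ∈ (univ ×ˢ univ : Finset (Y × Y)), A p.1 * (g₁ p.1 * g₂ p.2 - g₂ p.1 * g₁ p.2) := by
    rw [two_mul]
    nth_rewrite 2 [swap]
    rw [← Finset.sum_add_distrib]
    apply Finset.sum_congr rfl
    intro p _
    ring
  have hdouble : ∑ p ∈ (univ ×ˢ univ : Finset (Y × Y)), A p.1 * (g₁ p.1 * g₂ p.2 - g₂ p.1 * g₁ p.2)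
      = (∑ y, g₁ y * A y) * (∑ y, g₂ y) - (∑ y, g₂ y * A y) * (∑ y, g₁ y) := by
    rw [Finset.sum_mul_sum, Finset.sum_mul_sum, ← Finset.sum_sub_distrib]
    rw [Finset.sum_product]
    apply Finset.sum_congr rfl
    intro a _
    rw [← Finset.sum_sub_distrib]
    apply Finset.sum_congr rfl
    intro b _
    ring
  rw [expand, hdouble] at key
  have : (∑ y, g₂ y * A y) * (∑ y, g₁ y) < (∑ y, g₁ y * A y) * (∑ y, g₂ y) := by linarith
  simpa [hg₁, hg₂] using this

lemma exp_jensen_strict {Y : Type*} [Fintype Y]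
    (p B : Y → ℝ) (hp : ∀ y, 0 < p y) (hsum : ∑ y, p y = 1)
    (y₀ : Y) (h0 : B y₀ ≠ ∑ y, p y * B y) :
    Real.exp (∑ y, p y * B y) < ∑ y, p y * Real.exp (B y) := by
  set m := ∑ y, p y * B y with hm
  have hlb : ∀ y, p y * (1 + (B y - m)) ≤ p y * Real.exp (B y - m) := fun y =>
    mul_le_mul_of_nonneg_left (by linarith [Real.add_one_le_exp (B y - m)]) (hp y).le
  have hstrict : p y₀ * (1 + (B y₀ - m)) < p y₀ * Real.exp (B y₀ - m) := by
    have hne : B y₀ - m ≠ 0 := sub_ne_zero.mpr h0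
    have := Real.add_one_lt_exp hne
    exact mul_lt_mul_of_pos_left (by linarith) (hp y₀)
  have hsum1 : ∑ y, p y * (1 + (B y - m)) = 1 := by
    have h1 : ∑ y, p y * (1 + (B y - m)) = ∑ y, (p y + (p y * B y - m * p y)) :=
      Finset.sum_congr rfl fun y _ => by ring
    rw [h1, Finset.sum_add_distrib, Finset.sum_sub_distrib, ← Finset.mul_sum, hsum, ← hm]
    ring
  have hgt : 1 < ∑ y, p y * Real.exp (B y - m) := by
    calc 1 = ∑ y, p y * (1 + (B y - m)) := hsum1.symm
      _ < ∑ y, p y * Real.exp (B y - m) :=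
        Finset.sum_lt_sum (fun y _ => hlb y) ⟨y₀, mem_univ _, hstrict⟩
  have hexp : ∑ y, p y * Real.exp (B y) = Real.exp m * ∑ y, p y * Real.exp (B y - m) := by
    rw [Finset.mul_sum]
    apply Finset.sum_congr rfl; intro y _
    rw [Real.exp_sub]
    field_simp
  rw [hexp]
  nlinarith [Real.exp_pos m]

lemma kl_formula {Y : Type*} [Fintype Y] [Nonempty Y] (A w : Y → ℝ)
    (hw : ∀ y, 0 < w y) (β : ℝ) :
    (∑ y, (w y * Real.exp (A y / β) / (∑ y', w y' * Real.exp (A y' / β))) *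
      Real.log ((w y * Real.exp (A y / β) / (∑ y', w y' * Real.exp (A y' / β))) / w y))
    = (∑ y, (w y * Real.exp (A y / β) / (∑ y', w y' * Real.exp (A y' / β))) * A y) / β
      - Real.log (∑ y', w y' * Real.exp (A y' / β)) := by
  set Z := ∑ y', w y' * Real.exp (A y' / β) with hZ
  have hZpos : 0 < Z := Finset.sum_pos (fun y _ => mul_pos (hw y) (Real.exp_pos _))
    Finset.univ_nonempty
  have hlog : ∀ y, Real.log ((w y * Real.exp (A y / β) / Z) / w y)
      = A y / β - Real.log Z := by
    intro y
    have h1 : (w y * Real.exp (A y / β) / Z) / w y = Real.exp (A y / β) / Z := by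
      rw [div_div, mul_comm Z (w y), ← div_div, mul_div_cancel_left₀ _ (hw y).ne']
    rw [h1, Real.log_div (Real.exp_ne_zero _) hZpos.ne', Real.log_exp]
  have hsum1 : ∑ y, w y * Real.exp (A y / β) / Z = 1 := by
    rw [← Finset.sum_div, ← hZ, div_self hZpos.ne']
  calc ∑ y, (w y * Real.exp (A y / β) / Z) * Real.log ((w y * Real.exp (A y / β) / Z) / w y)
      = ∑ y, ((w y * Real.exp (A y / β) / Z) * A y / β
          - (w y * Real.exp (A y / β) / Z) * Real.log Z) := by
        apply Finset.sum_congr rfl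
        intro y _
        rw [hlog y]
        ring
    _ = (∑ y, (w y * Real.exp (A y / β) / Z) * A y) / β
          - (∑ y, w y * Real.exp (A y / β) / Z) * Real.log Z := by
        rw [Finset.sum_sub_distrib, Finset.sum_div, Finset.sum_mul]
    _ = _ := by rw [hsum1, one_mul]
theorem tilted_policy_pareto_monotone
    {Y : Type*} [Fintype Y] [Nonempty Y]
    (A : Y → ℝ) (hA : ∃ y y' : Y, A y ≠ A y')
    (πref : Y → ℝ) (hπref : ∀ y, 0 < πref y) (hπrefsum : ∑ y, πref y = 1)
    (πβ : ℝ → Y → ℝ)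
    (hπβ : ∀ β y, πβ β y = πref y * Real.exp (A y / β)
      / (∑ y', πref y' * Real.exp (A y' / β))) :
    ∀ β₁ β₂ : ℝ, 0 < β₁ → β₁ < β₂ →
      (∑ y, πβ β₂ y * A y) < (∑ y, πβ β₁ y * A y) ∧
      (∑ y, πβ β₂ y * Real.log (πβ β₂ y / πref y))
        < (∑ y, πβ β₁ y * Real.log (πβ β₁ y / πref y)) := by
  intro β₁ β₂ hβ₁ hβ
  obtain ⟨ya, yb, hab⟩ := hA
  have hβ₂ : 0 < β₂ := hβ₁.trans hβ
  have ht : 1/β₂ < 1/β₁ := one_div_lt_one_div_of_lt hβ₁ hβ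
  -- Chebyshev correlation inequality
  have hcheb := cheb_sum A πref hπref (1/β₁) (1/β₂) ht ya yb hab
  simp only [one_div_mul_eq_div] at hcheb
  -- notation
  set g₁ : Y → ℝ := fun y => πref y * Real.exp (A y / β₁) with hg₁
  set g₂ : Y → ℝ := fun y => πref y * Real.exp (A y / β₂) with hg₂
  set Z₁ : ℝ := ∑ y, g₁ y with hZ₁def
  set Z₂ : ℝ := ∑ y, g₂ y with hZ₂def
  have hZ₁ : 0 < Z₁ := Finset.sum_pos (fun y _ => mul_pos (hπref y) (Real.exp_pos _))
    Finset.univ_nonempty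
  have hZ₂ : 0 < Z₂ := Finset.sum_pos (fun y _ => mul_pos (hπref y) (Real.exp_pos _))
    Finset.univ_nonempty
  have hπ1 : ∀ y, πβ β₁ y = g₁ y / Z₁ := fun y => hπβ β₁ y
  have hπ2 : ∀ y, πβ β₂ y = g₂ y / Z₂ := fun y => hπβ β₂ y
  -- expected advantages
  set F₁ : ℝ := ∑ y, (g₁ y / Z₁) * A y with hF₁def
  set F₂ : ℝ := ∑ y, (g₂ y / Z₂) * A y with hF₂def
  have hF₁eq : F₁ = (∑ y, g₁ y * A y) / Z₁ := by
    rw [hF₁def, Finset.sum_div]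
    exact Finset.sum_congr rfl fun y _ => by ring
  have hF₂eq : F₂ = (∑ y, g₂ y * A y) / Z₂ := by
    rw [hF₂def, Finset.sum_div]
    exact Finset.sum_congr rfl fun y _ => by ring
  have hF : F₂ < F₁ := by
    rw [hF₁eq, hF₂eq, div_lt_div_iff₀ hZ₂ hZ₁]
    exact hcheb
  have hadv1 : (∑ y, πβ β₁ y * A y) = F₁ :=
    Finset.sum_congr rfl fun y _ => by rw [hπ1 y]
  have hadv2 : (∑ y, πβ β₂ y * A y) = F₂ :=
    Finset.sum_congr rfl fun y _ => by rw [hπ2 y]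
  constructor
  · rw [hadv1, hadv2]; exact hF
  -- KL part
  have hsum1 : ∑ y, g₁ y / Z₁ = 1 := by
    rw [← Finset.sum_div, ← hZ₁def, div_self hZ₁.ne']
  -- Jensen: Z₂ / Z₁ > exp ((1/β₂ - 1/β₁) * F₁)
  have hmean : ∑ y, (g₁ y / Z₁) * ((1/β₂ - 1/β₁) * A y) = (1/β₂ - 1/β₁) * F₁ := by
    rw [hF₁def, Finset.mul_sum]
    exact Finset.sum_congr rfl fun y _ => by ring
  have hy0 : ∃ y₀, (1/β₂ - 1/β₁) * A y₀ ≠ ∑ y, (g₁ y / Z₁) * ((1/β₂ - 1/β₁) * A y) := by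
    rw [hmean]
    have hne : (1/β₂ - 1/β₁) ≠ 0 := by linarith
    by_contra hcon
    push_neg at hcon
    have h1 := mul_left_cancel₀ hne ((hcon ya).trans (hcon yb).symm)
    exact hab h1
  obtain ⟨y₀, hy₀⟩ := hy0
  have hjensen := exp_jensen_strict (fun y => g₁ y / Z₁) (fun y => (1/β₂ - 1/β₁) * A y)
    (fun y => div_pos (mul_pos (hπref y) (Real.exp_pos _)) hZ₁) hsum1 y₀ hy₀
  rw [hmean] at hjensen
  have hZratio : ∑ y, (g₁ y / Z₁) * Real.exp ((1/β₂ - 1/β₁) * A y) = Z₂ / Z₁ := by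
    rw [hZ₂def, Finset.sum_div]
    apply Finset.sum_congr rfl
    intro y _
    rw [hg₁, hg₂]
    have : Real.exp (A y / β₁) * Real.exp ((1/β₂ - 1/β₁) * A y) = Real.exp (A y / β₂) := by
      rw [← Real.exp_add]
      congr 1
      field_simp
      ring
    calc πref y * Real.exp (A y / β₁) / Z₁ * Real.exp ((1/β₂ - 1/β₁) * A y)
        = πref y * (Real.exp (A y / β₁) * Real.exp ((1/β₂ - 1/β₁) * A y)) / Z₁ := by ring
      _ = πref y * Real.exp (A y / β₂) / Z₁ := by rw [this]
  rw [hZratio] at hjensen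
  have hlogZ : (1/β₂ - 1/β₁) * F₁ < Real.log Z₂ - Real.log Z₁ := by
    have := (Real.lt_log_iff_exp_lt (div_pos hZ₂ hZ₁)).mpr hjensen
    rwa [Real.log_div hZ₂.ne' hZ₁.ne'] at this
  -- rewrite KL terms
  have hKL1 : (∑ y, πβ β₁ y * Real.log (πβ β₁ y / πref y)) = F₁ / β₁ - Real.log Z₁ := by
    have := kl_formula A πref hπref β₁
    calc (∑ y, πβ β₁ y * Real.log (πβ β₁ y / πref y))
        = (∑ y, (g₁ y / Z₁) * Real.log ((g₁ y / Z₁) / πref y)) :=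
          Finset.sum_congr rfl fun y _ => by rw [hπ1 y]
      _ = F₁ / β₁ - Real.log Z₁ := this
  have hKL2 : (∑ y, πβ β₂ y * Real.log (πβ β₂ y / πref y)) = F₂ / β₂ - Real.log Z₂ := by
    have := kl_formula A πref hπref β₂
    calc (∑ y, πβ β₂ y * Real.log (πβ β₂ y / πref y))
        = (∑ y, (g₂ y / Z₂) * Real.log ((g₂ y / Z₂) / πref y)) :=
          Finset.sum_congr rfl fun y _ => by rw [hπ2 y]
      _ = F₂ / β₂ - Real.log Z₂ := this
  rw [hKL1, hKL2]
  have heq : (1/β₂ - 1/β₁) * F₁ = F₁ / β₂ - F₁ / β₁ := by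
    rw [sub_mul, one_div_mul_eq_div, one_div_mul_eq_div]
  have hkey : F₂ / β₂ < F₁ / β₂ := (div_lt_div_iff_of_pos_right hβ₂).mpr hF
  linarith
end
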